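/- arXiv:1503.03433 — 13 statements merged into one kernel-verified Lean document; each statement's English description precedes it below -/
import Mathlib

section
/- Every ordered pair of relatively prime positive integers appears exactly once in the sequence of consecutive pairs of Stern's diatomic sequence; that is, the map n ↦ (a_n, a_{n+1}) is a bijection from the positive integers onto the set of pairs (p, q) of positive integers with gcd(p, q) = 1. -/
section SternAux

lemma stern_pos (a : ℕ → ℕ) (h1 : a 1 = 1)
    (heven : ∀ n, 1 ≤ n → a (2 * n) = a n)
    (hodd : ∀ n, 1 ≤ n → a (2 * n + 1) = a n + a (n + 1)) :
    ∀ n, 1 ≤ n → 0 < a n := by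
  intro n
  induction n using Nat.strong_induction_on with
  | _ n ih =>
    intro hn
    rcases Nat.even_or_odd n with ⟨k, hk⟩ | ⟨k, hk⟩
    · have hk' : n = 2 * k := by omega
      have hk1 : 1 ≤ k := by omega
      rw [hk', heven k hk1]
      exact ih k (by omega) hk1
    · rcases Nat.eq_zero_or_pos k with rfl | hk1
      · have hn1 : n = 1 := by omega
        rw [hn1, h1]; exact Nat.one_pos
      · rw [hk, hodd k hk1]
        have := ih k (by omega) hk1
        omega

lemma stern_gcd (a : ℕ → ℕ) (h1 : a 1 = 1)
    (heven : ∀ n, 1 ≤ n → a (2 * n) = a n)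
    (hodd : ∀ n, 1 ≤ n → a (2 * n + 1) = a n + a (n + 1)) :
    ∀ n, 1 ≤ n → Nat.gcd (a n) (a (n + 1)) = 1 := by
  intro n
  induction n using Nat.strong_induction_on with
  | _ n ih =>
    intro hn
    rcases Nat.even_or_odd n with ⟨k, hk⟩ | ⟨k, hk⟩
    · have hk' : n = 2 * k := by omega
      have hk1 : 1 ≤ k := by omega
      rw [hk', heven k hk1, hodd k hk1, Nat.gcd_self_add_right]
      exact ih k (by omega) hk1
    · rcases Nat.eq_zero_or_pos k with rfl | hk1
      · have h2 : a 2 = a 1 := by simpa using heven 1 le_rfl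
        simp [hk, h1, h2]
      · have h2 : (2 * k + 1) + 1 = 2 * (k + 1) := by ring
        rw [hk, hodd k hk1, h2, heven (k + 1) (by omega), Nat.gcd_add_self_left]
        exact ih k (by omega) hk1

lemma stern_shape (a : ℕ → ℕ) (h1 : a 1 = 1)
    (heven : ∀ n, 1 ≤ n → a (2 * n) = a n)
    (hodd : ∀ n, 1 ≤ n → a (2 * n + 1) = a n + a (n + 1)) :
    ∀ n, 1 ≤ n →
      (a n < a (n + 1) → ∃ k, 1 ≤ k ∧ n = 2 * k) ∧
      (a (n + 1) < a n → ∃ k, 1 ≤ k ∧ n = 2 * k + 1) ∧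
      (a n = a (n + 1) → n = 1) := by
  have pos := stern_pos a h1 heven hodd
  intro n hn
  -- first establish the comparisons by shape
  rcases Nat.even_or_odd n with ⟨k, hk⟩ | ⟨k, hk⟩
  · have hk' : n = 2 * k := by omega
    have hk1 : 1 ≤ k := by omega
    have hlt : a n < a (n + 1) := by
      rw [hk', heven k hk1, hodd k hk1]
      have := pos (k + 1) (by omega)
      omega
    exact ⟨fun _ => ⟨k, hk1, hk'⟩, fun h => absurd hlt (by omega),
      fun h => absurd hlt (by omega)⟩
  · rcases Nat.eq_zero_or_pos k with rfl | hk1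
    · have h2 : a (1 + 1) = 1 := by
        have := heven 1 le_rfl
        norm_num at this
        simpa [h1] using this
      have hn1 : n = 1 := by omega
      subst hn1
      refine ⟨fun h => ?_, fun h => ?_, fun _ => rfl⟩ <;> omega
    · have hgt : a (n + 1) < a n := by
        have h2 : n + 1 = 2 * (k + 1) := by omega
        rw [h2, heven (k + 1) (by omega), hk, hodd k hk1]
        have := pos k hk1
        omega
      exact ⟨fun h => absurd hgt (by omega), fun _ => ⟨k, hk1, hk⟩,
        fun h => absurd hgt (by omega)⟩

lemma stern_inj (a : ℕ → ℕ) (h1 : a 1 = 1)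
    (heven : ∀ n, 1 ≤ n → a (2 * n) = a n)
    (hodd : ∀ n, 1 ≤ n → a (2 * n + 1) = a n + a (n + 1)) :
    ∀ m, 1 ≤ m → ∀ n, 1 ≤ n → a m = a n → a (m + 1) = a (n + 1) → m = n := by
  have shape := stern_shape a h1 heven hodd
  intro m
  induction m using Nat.strong_induction_on with
  | _ m ih =>
    intro hm n hn he1 he2
    rcases lt_trichotomy (a m) (a (m + 1)) with hlt | heq | hgt
    · obtain ⟨j, hj1, hj⟩ := (shape m hm).1 hlt
      obtain ⟨l, hl1, hl⟩ := (shape n hn).1 (by omega)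
      subst hj; subst hl
      have e1 : a j = a l := by rwa [heven j hj1, heven l hl1] at he1
      have e2 : a (j + 1) = a (l + 1) := by
        rw [hodd j hj1, hodd l hl1] at he2
        omega
      have := ih j (by omega) hj1 l hl1 e1 e2
      omega
    · have hm1 := (shape m hm).2.2 heq
      have hn1 := (shape n hn).2.2 (by omega)
      omega
    · obtain ⟨j, hj1, hj⟩ := (shape m hm).2.1 hgt
      obtain ⟨l, hl1, hl⟩ := (shape n hn).2.1 (by omega)
      subst hj; subst hl
      have e2 : a (j + 1) = a (l + 1) := by
        have hj2 : 2 * j + 1 + 1 = 2 * (j + 1) := by ring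
        have hl2 : 2 * l + 1 + 1 = 2 * (l + 1) := by ring
        rwa [hj2, hl2, heven (j + 1) (by omega), heven (l + 1) (by omega)] at he2
      have e1 : a j = a l := by
        rw [hodd j hj1, hodd l hl1] at he1
        omega
      have := ih j (by omega) hj1 l hl1 e1 e2
      omega

lemma stern_surj (a : ℕ → ℕ) (h1 : a 1 = 1)
    (heven : ∀ n, 1 ≤ n → a (2 * n) = a n)
    (hodd : ∀ n, 1 ≤ n → a (2 * n + 1) = a n + a (n + 1)) :
    ∀ s p q, p + q = s → 0 < p → 0 < q → Nat.gcd p q = 1 →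
      ∃ n, 1 ≤ n ∧ a n = p ∧ a (n + 1) = q := by
  intro s
  induction s using Nat.strong_induction_on with
  | _ s ih =>
    intro p q hs hp hq hg
    rcases lt_trichotomy p q with hlt | heq | hgt
    · obtain ⟨n, hn, e1, e2⟩ := ih (p + (q - p)) (by omega) p (q - p) rfl hp (by omega)
        (by rw [← hg]; conv_rhs => rw [show q = p + (q - p) by omega]
            rw [Nat.gcd_self_add_right])
      refine ⟨2 * n, by omega, ?_, ?_⟩
      · rw [heven n hn]; exact e1
      · rw [hodd n hn]; omega
    · subst heq
      have hp1 : p = 1 := by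
        have : Nat.gcd p p = p := Nat.gcd_self p
        omega
      refine ⟨1, le_rfl, by omega, ?_⟩
      have h2 : a (1 + 1) = 1 := by
        have := heven 1 le_rfl
        norm_num at this
        simpa [h1] using this
      omega
    · obtain ⟨n, hn, e1, e2⟩ := ih ((p - q) + q) (by omega) (p - q) q rfl (by omega) hq
        (by rw [← hg]; conv_rhs => rw [show p = (p - q) + q by omega]
            rw [Nat.gcd_add_self_left])
      refine ⟨2 * n + 1, by omega, ?_, ?_⟩
      · rw [hodd n hn]; omega
      · have h2 : 2 * n + 1 + 1 = 2 * (n + 1) := by ring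
        rw [h2, heven (n + 1) (by omega)]; exact e2

end SternAux

/-- Stern's diatomic sequence: every ordered pair of relatively prime positive
integers appears exactly once among the consecutive pairs `(a n, a (n+1))`. -/
theorem stern_pairs_bijOn
    (a : ℕ → ℕ)
    (h0 : a 0 = 0) (h1 : a 1 = 1)
    (heven : ∀ n, 1 ≤ n → a (2 * n) = a n)
    (hodd : ∀ n, 1 ≤ n → a (2 * n + 1) = a n + a (n + 1)) :
    Set.BijOn (fun n => (a n, a (n + 1))) {n : ℕ | 0 < n}
      {p : ℕ × ℕ | 0 < p.1 ∧ 0 < p.2 ∧ Nat.gcd p.1 p.2 = 1} := by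
  have pos := stern_pos a h1 heven hodd
  have gcd := stern_gcd a h1 heven hodd
  have inj := stern_inj a h1 heven hodd
  have surj := stern_surj a h1 heven hodd
  refine ⟨?_, ?_, ?_⟩
  · intro n hn
    simp only [Set.mem_setOf_eq] at hn ⊢
    exact ⟨pos n hn, pos (n + 1) (by omega), gcd n hn⟩
  · intro m hm n hn h
    simp only [Set.mem_setOf_eq] at hm hn
    simp only [Prod.mk.injEq] at h
    exact inj m hm n hn h.1 h.2
  · intro p hp
    simp only [Set.mem_setOf_eq] at hp
    obtain ⟨n, hn, e1, e2⟩ := surj (p.1 + p.2) p.1 p.2 rfl hp.1 hp.2.1 hp.2.2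
    exact ⟨n, hn, by simp [e1, e2]⟩
end

section
/- For every n ≥ 0, a_{n+1} = Σ_{k=0}^{n} σ^{s₂(k)} · σ̄^{s₂(n−k)}, where the equality holds in the complex numbers. -/
/-- The number of ones in the binary expansion of `n`. -/
def s₂ (n : ℕ) : ℕ := (Nat.digits 2 n).count 1

/-- `σ = (1 + i√3)/2`, a primitive sixth root of unity. -/
noncomputable def σ : ℂ := (1 + Real.sqrt 3 * Complex.I) / 2

lemma s2_zero : s₂ 0 = 0 := by simp [s₂]

lemma s2_two_mul (k : ℕ) : s₂ (2 * k) = s₂ k := by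
  rcases Nat.eq_zero_or_pos k with h | h
  · simp [h]
  · unfold s₂
    rw [Nat.digits_def' (by norm_num : 1 < 2) (by omega),
        show (2 * k) % 2 = 0 by omega, show (2 * k) / 2 = k by omega]
    simp [List.count_cons]

lemma s2_two_mul_add_one (k : ℕ) : s₂ (2 * k + 1) = s₂ k + 1 := by
  unfold s₂
  rw [Nat.digits_def' (by norm_num : 1 < 2) (by omega),
      show (2 * k + 1) % 2 = 1 by omega, show (2 * k + 1) / 2 = k by omega]
  simp [List.count_cons]

lemma sigma_conj : (starRingEnd ℂ) σ = (1 - Real.sqrt 3 * Complex.I) / 2 := by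
  unfold σ
  rw [map_div₀, map_add, map_mul, map_one, Complex.conj_I, Complex.conj_ofReal, map_ofNat]
  ring

lemma sigma_add_conj : σ + (starRingEnd ℂ) σ = 1 := by
  rw [sigma_conj]; unfold σ; ring

lemma sigma_mul_conj : σ * (starRingEnd ℂ) σ = 1 := by
  rw [sigma_conj]; unfold σ
  have h : ((Real.sqrt 3 : ℝ) : ℂ) ^ 2 = 3 := by
    rw [← Complex.ofReal_pow, Real.sq_sqrt (by norm_num : (0:ℝ) ≤ 3)]
    norm_num
  have hI := Complex.I_sq
  linear_combination (-(Complex.I ^ 2) / 4) * h + (-(3 : ℂ) / 4) * hI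

lemma sum_range_two_mul (f : ℕ → ℂ) (n : ℕ) :
    ∑ k ∈ Finset.range (2 * n), f k = ∑ j ∈ Finset.range n, (f (2 * j) + f (2 * j + 1)) := by
  induction n with
  | zero => simp
  | succ n ih =>
    rw [show 2 * (n + 1) = 2 * n + 1 + 1 by ring, Finset.sum_range_succ, Finset.sum_range_succ,
        ih, Finset.sum_range_succ]
    ring

/-- Binet-type formula for Stern's diatomic sequence. -/
theorem stern_binet
    (a : ℕ → ℕ)
    (h0 : a 0 = 0) (h1 : a 1 = 1)
    (heven : ∀ n, 1 ≤ n → a (2 * n) = a n)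
    (hodd : ∀ n, 1 ≤ n → a (2 * n + 1) = a n + a (n + 1))
    (n : ℕ) :
    (a (n + 1) : ℂ) =
      ∑ k ∈ Finset.range (n + 1),
        σ ^ (s₂ k) * ((starRingEnd ℂ) σ) ^ (s₂ (n - k)) := by
  induction n using Nat.strong_induction_on with
  | _ n ih =>
    rcases Nat.even_or_odd n with ⟨m, hm⟩ | ⟨m, hm⟩
    · -- n = m + m, even
      rcases Nat.eq_zero_or_pos m with h0' | hpos
      · subst hm; subst h0'
        simp [h1, s2_zero]
      · obtain ⟨l, rfl⟩ : ∃ l, m = l + 1 := ⟨m - 1, by omega⟩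
        subst hm
        have e1 : (l + 1) + (l + 1) = 2 * (l + 1) := by ring
        rw [e1]
        have hL : (a (l + 1) : ℂ) =
            ∑ k ∈ Finset.range (l + 1), σ ^ (s₂ k) * ((starRingEnd ℂ) σ) ^ (s₂ (l - k)) :=
          ih l (by omega)
        have hL1 : (a (l + 2) : ℂ) =
            ∑ k ∈ Finset.range (l + 2), σ ^ (s₂ k) * ((starRingEnd ℂ) σ) ^ (s₂ (l + 1 - k)) :=
          ih (l + 1) (by omega)
        have ha : a (2 * (l + 1) + 1) = a (l + 1) + a (l + 2) := hodd (l + 1) (by omega)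
        have pairs : ∀ j ∈ Finset.range (l + 1),
            σ ^ (s₂ (2 * j)) * ((starRingEnd ℂ) σ) ^ (s₂ (2 * (l + 1) - 2 * j)) +
              σ ^ (s₂ (2 * j + 1)) * ((starRingEnd ℂ) σ) ^ (s₂ (2 * (l + 1) - (2 * j + 1))) =
            σ ^ (s₂ j) * ((starRingEnd ℂ) σ) ^ (s₂ (l + 1 - j)) +
              σ ^ (s₂ j) * ((starRingEnd ℂ) σ) ^ (s₂ (l - j)) := by
          intro j hj
          rw [Finset.mem_range] at hj
          rw [show 2 * (l + 1) - 2 * j = 2 * (l + 1 - j) by omega,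
              show 2 * (l + 1) - (2 * j + 1) = 2 * (l - j) + 1 by omega,
              s2_two_mul, s2_two_mul, s2_two_mul_add_one, s2_two_mul_add_one,
              pow_succ, pow_succ]
          linear_combination (σ ^ (s₂ j) * ((starRingEnd ℂ) σ) ^ (s₂ (l - j))) * sigma_mul_conj
        have R : ∑ k ∈ Finset.range (2 * (l + 1) + 1),
              σ ^ (s₂ k) * ((starRingEnd ℂ) σ) ^ (s₂ (2 * (l + 1) - k)) =
            (∑ k ∈ Finset.range (l + 2),
              σ ^ (s₂ k) * ((starRingEnd ℂ) σ) ^ (s₂ (l + 1 - k))) +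
            ∑ k ∈ Finset.range (l + 1),
              σ ^ (s₂ k) * ((starRingEnd ℂ) σ) ^ (s₂ (l - k)) := by
          rw [Finset.sum_range_succ, sum_range_two_mul]
          rw [Finset.sum_congr rfl pairs, Finset.sum_add_distrib]
          rw [Finset.sum_range_succ
            (fun k => σ ^ (s₂ k) * ((starRingEnd ℂ) σ) ^ (s₂ (l + 1 - k))) (l + 1)]
          rw [s2_two_mul, Nat.sub_self, Nat.sub_self]
          ring
        rw [ha, R]
        push_cast
        rw [hL, hL1]
        ring
    · -- n = 2 * m + 1, odd
      subst hm
      have ha : a (2 * m + 1 + 1) = a (m + 1) := by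
        rw [show 2 * m + 1 + 1 = 2 * (m + 1) by ring]; exact heven (m + 1) (by omega)
      rw [ha, ih m (by omega),
          show 2 * m + 1 + 1 = 2 * (m + 1) by ring, sum_range_two_mul]
      refine Finset.sum_congr rfl ?_
      intro j hj
      rw [Finset.mem_range] at hj
      rw [show 2 * m + 1 - 2 * j = 2 * (m - j) + 1 by omega,
          show 2 * m + 1 - (2 * j + 1) = 2 * (m - j) by omega,
          s2_two_mul, s2_two_mul, s2_two_mul_add_one, s2_two_mul_add_one,
          pow_succ, pow_succ]
      linear_combination (-(σ ^ (s₂ j)) * ((starRingEnd ℂ) σ) ^ (s₂ (m - j))) * sigma_add_conj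
end

section
/- If a, b, c, d are positive real numbers with |ad − bc| = 1, then (ac) ⊕ (bd) = (a+b)(c+d). -/
/-- If `a, b, c, d > 0` and `|ad − bc| = 1` then `(ac) ⊕ (bd) = (a+b)(c+d)`,
where `x ⊕ y = x + y + √(4xy + 1)`. -/
theorem oplus_of_abs_det_eq_one
    (a b c d : ℝ) (ha : 0 < a) (hb : 0 < b) (hc : 0 < c) (hd : 0 < d)
    (h : |a * d - b * c| = 1) :
    a * c + b * d + Real.sqrt (4 * (a * c) * (b * d) + 1) = (a + b) * (c + d) := by
  have hsq : (a * d - b * c) ^ 2 = 1 := by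
    have := sq_abs (a * d - b * c)
    rw [h] at this; simpa using this.symm
  have h1 : 4 * (a * c) * (b * d) + 1 = (a * d + b * c) ^ 2 := by nlinarith
  rw [h1, Real.sqrt_sq (by positivity)]
  ring
end

section
/- The sequence x_n = F_n · F_{n+1} of products of consecutive Fibonacci numbers satisfies the modified Fibonacci recurrence x_{n+1} = x_n ⊕ x_{n−1} for all n ≥ 1; that is, F_{n+1}F_{n+2} = F_nF_{n+1} + F_{n−1}F_n + √(4·F_{n−1}F_n·F_nF_{n+1} + 1). -/
lemma fib_cassini_sq (m : ℕ) :
    (((Nat.fib (m+1)):ℤ)^2 - Nat.fib m * Nat.fib (m+1) - ((Nat.fib m):ℤ)^2)^2 = 1 := by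
  induction m with
  | zero => simp
  | succ k ih =>
      have h : (Nat.fib (k+2) : ℤ) = Nat.fib k + Nat.fib (k+1) := by
        rw [Nat.fib_add_two]; push_cast; ring
      rw [h]; nlinarith [ih]

/-- The products of consecutive Fibonacci numbers `x_n = F_n F_{n+1}` satisfy the
modified Fibonacci recurrence `x_{n+1} = x_n ⊕ x_{n-1}` where
`x ⊕ y = x + y + √(4xy + 1)`. -/
theorem fib_prod_oplus_recurrence (n : ℕ) (hn : 1 ≤ n) :
    (Nat.fib (n + 1) * Nat.fib (n + 2) : ℝ) =
      (Nat.fib n * Nat.fib (n + 1) : ℝ) + (Nat.fib (n - 1) * Nat.fib n : ℝ) +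
        Real.sqrt (4 * ((Nat.fib (n - 1) : ℝ) * Nat.fib n) *
          ((Nat.fib n : ℝ) * Nat.fib (n + 1)) + 1) := by
  obtain ⟨m, rfl⟩ : ∃ m, n = m + 1 := ⟨n - 1, (Nat.succ_pred_eq_of_pos hn).symm⟩
  simp only [Nat.add_sub_cancel]
  set a : ℝ := (Nat.fib m : ℝ) with ha
  set b : ℝ := (Nat.fib (m+1) : ℝ) with hb
  have ha0 : 0 ≤ a := by positivity
  have hab : a ≤ b := by rw [ha, hb]; exact_mod_cast Nat.fib_le_fib_succ
  have h2 : (Nat.fib (m+1+1) : ℝ) = a + b := by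
    rw [Nat.fib_add_two]; push_cast; ring
  have h3 : (Nat.fib (m+1+2) : ℝ) = b + (a + b) := by
    show (Nat.fib (m+3) : ℝ) = _
    rw [show m + 3 = (m+1) + 2 from rfl, Nat.fib_add_two]
    push_cast [h2]; ring
  have hk : (b^2 - a*b - a^2)^2 = 1 := by
    have h := fib_cassini_sq m
    rw [ha, hb]
    push_cast at h ⊢
    exact_mod_cast h
  have hsq : 4 * (a * b) * (b * (a + b)) + 1 = ((a+b)^2 - a*b)^2 := by
    linear_combination (-1 : ℝ) * hk
  have hnn : 0 ≤ (a+b)^2 - a*b := by nlinarith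
  rw [h2, h3, hsq, Real.sqrt_sq hnn]
  ring
end

section
/- For all natural numbers m, n ≥ 0 and j ≥ 1, if m + n = 2^j − 1 then a_{m+1}·a_{n+1} = a_m·a_n + 1. -/
/-- For Stern's diatomic sequence, if `m + n = 2^j - 1` then
`a (m+1) * a (n+1) = a m * a n + 1`. -/
theorem stern_cross_identity
    (a : ℕ → ℕ)
    (h0 : a 0 = 0) (h1 : a 1 = 1)
    (heven : ∀ n, 1 ≤ n → a (2 * n) = a n)
    (hodd : ∀ n, 1 ≤ n → a (2 * n + 1) = a n + a (n + 1))
    (m n j : ℕ) (hj : 1 ≤ j) (h : m + n = 2 ^ j - 1) :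
    a (m + 1) * a (n + 1) = a m * a n + 1 := by
  have heven' : ∀ k, a (2 * k) = a k := by
    intro k
    rcases k with _ | k
    · simp
    · exact heven _ (Nat.succ_le_succ (Nat.zero_le _))
  have hodd' : ∀ k, a (2 * k + 1) = a k + a (k + 1) := by
    intro k
    rcases k with _ | k
    · simp [h0, h1]
    · exact hodd _ (Nat.succ_le_succ (Nat.zero_le _))
  revert m n h
  induction j, hj using Nat.le_induction with
  | base =>
    intro p q hpq
    simp only [pow_one] at hpq
    have : (p = 0 ∧ q = 1) ∨ (p = 1 ∧ q = 0) := by omega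
    have h2 : a 2 = a 1 := by simpa using heven' 1
    rcases this with ⟨rfl, rfl⟩ | ⟨rfl, rfl⟩ <;> simp [h0, h1, h2]
  | succ j hj IH =>
    intro p q hpq
    have hpow : (1:ℕ) ≤ 2 ^ j := Nat.one_le_two_pow
    have hpow2 : (2:ℕ) ^ (j + 1) = 2 * 2 ^ j := by ring
    rw [hpow2] at hpq
    rcases Nat.even_or_odd p with ⟨u, hu⟩ | ⟨u, hu⟩
    · obtain ⟨v, hv⟩ : ∃ v, q = 2 * v + 1 := ⟨q / 2, by omega⟩
      have hp2 : p = 2 * u := by omega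
      subst hp2; subst hv
      rw [hodd' u, show 2 * v + 1 + 1 = 2 * (v + 1) from by ring, heven' (v + 1),
        heven' u, hodd' v]
      have IH' := IH u v (by omega)
      rw [add_mul, IH', mul_add]
      ring
    · obtain ⟨v, hv⟩ : ∃ v, q = 2 * v := ⟨q / 2, by omega⟩
      subst hu; subst hv
      rw [show 2 * u + 1 + 1 = 2 * (u + 1) from by ring, heven' (u + 1),
        hodd' v, hodd' u, heven' v]
      have IH' := IH u v (by omega)
      rw [mul_add, IH', add_mul]
      ring
end

section
/- For all j ≥ 0 and all k with 2^j ≤ k ≤ 2^{j+1}, one has b_k = a_{2^{j+1}−k} · a_{k−2^j}. -/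
private lemma stern_det
    (a : ℕ → ℕ)
    (ha0 : a 0 = 0) (ha1 : a 1 = 1)
    (ha2 : ∀ n, a (2 * n) = a n)
    (ha2' : ∀ n, a (2 * n + 1) = a n + a (n + 1)) :
    ∀ j m, m < 2 ^ j → a (2 ^ j - m) * a (m + 1) = a (2 ^ j - m - 1) * a m + 1 := by
  intro j
  induction j with
  | zero =>
    intro m hm
    interval_cases m
    simp [ha0, ha1]
  | succ j ih =>
    intro m hm
    have h2 : 2 ^ (j + 1) = 2 * 2 ^ j := by ring
    rcases Nat.even_or_odd m with ⟨t, ht⟩ | ⟨t, ht⟩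
    · subst ht
      have ht' : t < 2 ^ j := by omega
      have e1 : 2 ^ (j + 1) - (t + t) = 2 * (2 ^ j - t) := by omega
      have e2 : 2 ^ (j + 1) - (t + t) - 1 = 2 * (2 ^ j - t - 1) + 1 := by omega
      have e3 : t + t = 2 * t := by ring
      have e4 : 2 ^ j - t - 1 + 1 = 2 ^ j - t := by omega
      rw [e2, e1, e3, ha2, ha2', ha2', ha2, e4]
      have h := ih t ht'
      nlinarith [h]
    · subst ht
      have ht' : t < 2 ^ j := by omega
      have e1 : 2 ^ (j + 1) - (2 * t + 1) = 2 * (2 ^ j - t - 1) + 1 := by omega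
      have e2 : 2 ^ (j + 1) - (2 * t + 1) - 1 = 2 * (2 ^ j - t - 1) := by omega
      have e3 : 2 * t + 1 + 1 = 2 * (t + 1) := by ring
      have e4 : 2 ^ j - t - 1 + 1 = 2 ^ j - t := by omega
      rw [e2, e1, e3, ha2, ha2', ha2', ha2, e4]
      have h := ih t ht'
      nlinarith [h]

private lemma b_key
    (a : ℕ → ℕ)
    (ha0 : a 0 = 0) (ha1 : a 1 = 1)
    (ha2 : ∀ n, a (2 * n) = a n)
    (ha2' : ∀ n, a (2 * n + 1) = a n + a (n + 1))
    (b : ℕ → ℝ)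
    (hb1 : b 1 = 0)
    (hbeven : ∀ n, 1 ≤ n → b (2 * n) = b n)
    (hbodd : ∀ n, 1 ≤ n → b (2 * n + 1) =
      b n + b (n + 1) + Real.sqrt (4 * b n * b (n + 1) + 1)) :
    ∀ j m, m ≤ 2 ^ j → b (2 ^ j + m) = (a (2 ^ j - m) : ℝ) * (a m : ℝ) := by
  intro j
  induction j with
  | zero =>
    intro m hm
    interval_cases m
    · simp [hb1, ha0]
    · have : b 2 = b 1 := hbeven 1 le_rfl
      norm_num [this, hb1, ha0]
  | succ j ih =>
    intro m hm
    have h2 : 2 ^ (j + 1) = 2 * 2 ^ j := by ring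
    have hpj : 1 ≤ 2 ^ j := Nat.one_le_two_pow
    rcases Nat.even_or_odd m with ⟨t, ht⟩ | ⟨t, ht⟩
    · subst ht
      have ht' : t ≤ 2 ^ j := by omega
      have e0 : 2 ^ (j + 1) + (t + t) = 2 * (2 ^ j + t) := by omega
      have e1 : 2 ^ (j + 1) - (t + t) = 2 * (2 ^ j - t) := by omega
      have e3 : t + t = 2 * t := by ring
      rw [e0, hbeven _ (by omega), e1, e3, ha2, ha2]
      exact ih t ht'
    · subst ht
      have ht' : t < 2 ^ j := by omega
      have e0 : 2 ^ (j + 1) + (2 * t + 1) = 2 * (2 ^ j + t) + 1 := by omega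
      rw [e0, hbodd _ (by omega)]
      have hb1' : b (2 ^ j + t) = (a (2 ^ j - t) : ℝ) * (a t : ℝ) := ih t (by omega)
      have e5 : 2 ^ j + t + 1 = 2 ^ j + (t + 1) := by omega
      have hb2' : b (2 ^ j + t + 1) = (a (2 ^ j - t - 1) : ℝ) * (a (t + 1) : ℝ) := by
        rw [e5, ih (t + 1) (by omega), show 2 ^ j - (t + 1) = 2 ^ j - t - 1 from by omega]
      have hd : a (2 ^ j - t) * a (t + 1) = a (2 ^ j - t - 1) * a t + 1 :=
        stern_det a ha0 ha1 ha2 ha2' j t ht'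
      have hdR : (a (2 ^ j - t) : ℝ) * (a (t + 1) : ℝ)
          = (a (2 ^ j - t - 1) : ℝ) * (a t : ℝ) + 1 := by exact_mod_cast hd
      rw [hb1', hb2']
      have hsq : Real.sqrt (4 * ((a (2 ^ j - t) : ℝ) * (a t : ℝ))
            * ((a (2 ^ j - t - 1) : ℝ) * (a (t + 1) : ℝ)) + 1)
          = (a (2 ^ j - t) : ℝ) * (a (t + 1) : ℝ)
            + (a (2 ^ j - t - 1) : ℝ) * (a t : ℝ) := by
        rw [show 4 * ((a (2 ^ j - t) : ℝ) * (a t : ℝ))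
            * ((a (2 ^ j - t - 1) : ℝ) * (a (t + 1) : ℝ)) + 1
            = ((a (2 ^ j - t) : ℝ) * (a (t + 1) : ℝ)
              + (a (2 ^ j - t - 1) : ℝ) * (a t : ℝ)) ^ 2 from by nlinarith [hdR]]
        exact Real.sqrt_sq (by positivity)
      rw [hsq]
      have e1 : 2 ^ (j + 1) - (2 * t + 1) = 2 * (2 ^ j - t - 1) + 1 := by omega
      have e4 : 2 ^ j - t - 1 + 1 = 2 ^ j - t := by omega
      rw [e1, ha2', ha2', e4]
      push_cast
      ring

/-- For `2^j ≤ k ≤ 2^{j+1}`, the sequence `b` defined by `b 1 = 0`,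
`b (2n) = b n`, `b (2n+1) = b n ⊕ b (n+1)` (with `x ⊕ y = x + y + √(4xy+1)`)
satisfies `b k = a (2^{j+1} - k) * a (k - 2^j)` where `a` is Stern's sequence. -/
theorem b_eq_stern_product
    (a : ℕ → ℕ)
    (ha0 : a 0 = 0) (ha1 : a 1 = 1)
    (haeven : ∀ n, 1 ≤ n → a (2 * n) = a n)
    (haodd : ∀ n, 1 ≤ n → a (2 * n + 1) = a n + a (n + 1))
    (b : ℕ → ℝ)
    (hb1 : b 1 = 0)
    (hbeven : ∀ n, 1 ≤ n → b (2 * n) = b n)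
    (hbodd : ∀ n, 1 ≤ n → b (2 * n + 1) =
      b n + b (n + 1) + Real.sqrt (4 * b n * b (n + 1) + 1))
    (j k : ℕ) (hk1 : 2 ^ j ≤ k) (hk2 : k ≤ 2 ^ (j + 1)) :
    b k = (a (2 ^ (j + 1) - k) : ℝ) * (a (k - 2 ^ j) : ℝ) := by
  have ha2 : ∀ n, a (2 * n) = a n := by
    intro n
    rcases Nat.eq_zero_or_pos n with h | h
    · simp [h]
    · exact haeven n h
  have ha2' : ∀ n, a (2 * n + 1) = a n + a (n + 1) := by
    intro n
    rcases Nat.eq_zero_or_pos n with h | h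
    · simp [h, ha0, ha1]
    · exact haodd n h
  have key := b_key a ha0 ha1 ha2 ha2' b hb1 hbeven hbodd j (k - 2 ^ j) (by omega)
  have e0 : 2 ^ j + (k - 2 ^ j) = k := by omega
  have e1 : 2 ^ j - (k - 2 ^ j) = 2 ^ (j + 1) - k := by
    have : 2 ^ (j + 1) = 2 * 2 ^ j := by ring
    omega
  rw [e0, e1] at key
  exact key
end

section
/- For every n ≥ 1, b_n is a nonnegative integer; that is, there exists a natural number m with b_n = m. -/
/-- Every term of the sequence `b` (with `b 1 = 0`, `b (2n) = b n`,
`b (2n+1) = b n + b (n+1) + √(4 b n b (n+1) + 1)`) is a nonnegative integer. -/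
theorem b_is_natural
    (b : ℕ → ℝ)
    (hb1 : b 1 = 0)
    (hbeven : ∀ n, 1 ≤ n → b (2 * n) = b n)
    (hbodd : ∀ n, 1 ≤ n → b (2 * n + 1) =
      b n + b (n + 1) + Real.sqrt (4 * b n * b (n + 1) + 1))
    (n : ℕ) (hn : 1 ≤ n) :
    ∃ m : ℕ, b n = (m : ℝ) := by
  have key : ∀ n, 1 ≤ n → ∃ p q k : ℕ, b n = p ∧ b (n + 1) = q ∧ k ^ 2 = 4 * p * q + 1 := by
    intro n
    induction n using Nat.strong_induction_on with
    | _ n ih =>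
      intro hn
      rcases eq_or_lt_of_le hn with h1 | h2
      · refine ⟨0, 0, 1, ?_, ?_, by norm_num⟩
        · rw [← h1, hb1]; norm_num
        · have := hbeven 1 le_rfl
          rw [← h1]; norm_num at this ⊢
          rw [this, hb1]
      · set m := n / 2 with hmdef
        have hm : n = 2 * m ∨ n = 2 * m + 1 := by omega
        have hm1 : 1 ≤ m := by omega
        have hmn : m < n := by omega
        obtain ⟨p, q, k, hp, hq, hk⟩ := ih m hmn hm1
        have hkR : ((k : ℝ)) ^ 2 = 4 * (p : ℝ) * q + 1 := by
          exact_mod_cast congrArg (Nat.cast : ℕ → ℝ) hk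
        have hsqrt : Real.sqrt (4 * b m * b (m + 1) + 1) = k := by
          rw [hp, hq, ← hkR, Real.sqrt_sq (by positivity)]
        have hodd : b (2 * m + 1) = (p : ℝ) + q + k := by
          rw [hbodd m hm1, hsqrt, hp, hq]
        rcases hm with hm | hm
        · refine ⟨p, p + q + k, 2 * p + k, ?_, ?_, ?_⟩
          · rw [hm, hbeven m hm1, hp]
          · rw [hm, hodd]; push_cast; ring
          · nlinarith [hk]
        · refine ⟨p + q + k, q, 2 * q + k, ?_, ?_, ?_⟩
          · rw [hm, hodd]; push_cast; ring
          · have : 2 * m + 1 + 1 = 2 * (m + 1) := by ring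
            rw [hm, this, hbeven (m + 1) (by omega), hq]
          · nlinarith [hk]
  obtain ⟨p, q, k, hp, _, _⟩ := key n hn
  exact ⟨p, hp⟩
end

section
/- Every ordered pair (p, q) of natural numbers such that 4pq + 1 is a perfect square appears exactly once in the sequence of consecutive pairs of (b_n); that is, the map k ↦ (b_k, b_{k+1}), defined for k ≥ 1, is a bijection onto the set {(p, q) ∈ ℕ × ℕ : ∃ m ∈ ℕ, 4pq + 1 = m²}. -/
namespace BPaux

def a : ℕ → ℕ
  | 0 => 0
  | 1 => 0
  | (n+2) =>
    if h : n % 2 = 0 then a ((n+2)/2)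
    else a ((n+2)/2) + a ((n+2)/2 + 1) + Nat.sqrt (4 * a ((n+2)/2) * a ((n+2)/2 + 1) + 1)
  decreasing_by all_goals omega

lemma a_one : a 1 = 0 := by simp [a]

lemma a_even (n : ℕ) (h : 1 ≤ n) : a (2*n) = a n := by
  have e : 2*n = (2*n - 2) + 2 := by omega
  rw [e, a]
  have h2 : (2*n-2) % 2 = 0 := by omega
  simp only [h2, if_true, dif_pos]
  congr 1; omega

lemma a_odd (n : ℕ) (h : 1 ≤ n) :
    a (2*n+1) = a n + a (n+1) + Nat.sqrt (4 * a n * a (n+1) + 1) := by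
  have e : 2*n+1 = (2*n - 1) + 2 := by omega
  rw [e, a]
  have h2 : ¬ ((2*n-1) % 2 = 0) := by omega
  rw [dif_neg h2]
  have e2 : (2*n-1+2)/2 = n := by omega
  rw [e2]

lemma a_two : a 2 = 0 := by
  have := a_even 1 le_rfl
  simpa [a_one] using this

lemma sqrt_of (x m : ℕ) (h : x = m*m) : Nat.sqrt x = m := by
  rw [h, ← pow_two, Nat.sqrt_eq']

lemma good_left (p q m : ℕ) (h : 4*p*q+1 = m*m) :
    4*p*(p+q+m)+1 = (m+2*p)*(m+2*p) := by nlinarith [h]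

lemma good_right (p q m : ℕ) (h : 4*p*q+1 = m*m) :
    4*(p+q+m)*q+1 = (m+2*q)*(m+2*q) := by nlinarith [h]

lemma m_ge (p q m : ℕ) (h : 4*p*q+1 = m*m) (hpq : p ≤ q) : 2*p+1 ≤ m := by
  by_contra hc
  push_neg at hc
  nlinarith

lemma m_le (p q m : ℕ) (h : 4*p*q+1 = m*m) (hpq : p ≠ q) : m ≤ p + q := by
  by_contra hc
  push_neg at hc
  have h1 : 1 ≤ (q:ℤ) - p ∨ (q:ℤ) - p ≤ -1 := by omega
  have h2 : ((p:ℤ)+q+1) ≤ m := by exact_mod_cast hc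
  have h3 : (4*(p:ℤ)*q+1 : ℤ) = (m:ℤ)*m := by exact_mod_cast h
  rcases h1 with h1 | h1 <;> nlinarith

lemma eq_zero_of_diag (p m : ℕ) (h : 4*p*p+1 = m*m) : p = 0 := by
  have h1 : 2*p+1 ≤ m := m_ge p p m h le_rfl
  have key : (2*p+1)*(2*p+1) ≤ m*m := Nat.mul_le_mul h1 h1
  nlinarith

lemma descend (p q m : ℕ) (h : 4*p*q+1 = m*m) (hpq : p < q) :
    ∃ x m0, 1 ≤ m0 ∧ q = p + x + m0 ∧ 4*p*x+1 = m0*m0 := by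
  have h1 := m_ge p q m h hpq.le
  have h2 := m_le p q m h (by omega)
  refine ⟨q - p - (m - 2*p), m - 2*p, by omega, by omega, ?_⟩
  have e : q = p + (q - p - (m-2*p)) + (m - 2*p) := by omega
  have e2 : m = (m - 2*p) + 2*p := by omega
  nlinarith [h, e, e2]

def Good (p q : ℕ) : Prop := ∃ m, 4*p*q+1 = m*m

lemma good_a : ∀ n, 1 ≤ n → Good (a n) (a (n+1)) := by
  intro n
  induction n using Nat.strong_induction_on with
  | _ n ih =>
    intro hn
    rcases Nat.lt_or_ge n 2 with h2 | h2
    · interval_cases n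
      exact ⟨1, by simp [a_one, a_two]⟩
    · rcases Nat.even_or_odd n with ⟨k, hk⟩ | ⟨k, hk⟩
      · have hk1 : 1 ≤ k := by omega
        obtain ⟨m, hm⟩ := ih k (by omega) hk1
        have e1 : a n = a k := by rw [hk, ← two_mul, a_even k hk1]
        have e2 : a (n+1) = a k + a (k+1) + m := by
          rw [hk, ← two_mul, a_odd k hk1, sqrt_of _ _ hm]
        exact ⟨m + 2 * a k, by rw [e1, e2]; exact good_left _ _ _ hm⟩
      · have hk1 : 1 ≤ k := by omega
        obtain ⟨m, hm⟩ := ih k (by omega) hk1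
        have e1 : a n = a k + a (k+1) + m := by
          rw [hk, a_odd k hk1, sqrt_of _ _ hm]
        have e2 : a (n+1) = a (k+1) := by
          have : n + 1 = 2*(k+1) := by omega
          rw [this, a_even (k+1) (by omega)]
        exact ⟨m + 2 * a (k+1), by rw [e1, e2]; exact good_right _ _ _ hm⟩

lemma sqrt_pos (p q : ℕ) : 1 ≤ Nat.sqrt (4*p*q+1) := by
  have := Nat.sqrt_le_sqrt (show 1 ≤ 4*p*q+1 by omega)
  simpa using this

lemma lt_of_even (k : ℕ) (h2 : 2 ≤ k) (he : k % 2 = 0) : a k < a (k+1) := by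
  obtain ⟨n, hn, hk⟩ : ∃ n, 1 ≤ n ∧ k = 2*n := ⟨k/2, by omega, by omega⟩
  subst hk
  rw [a_even n hn, a_odd n hn]
  have := sqrt_pos (a n) (a (n+1))
  omega

lemma gt_of_odd (k : ℕ) (h2 : 2 ≤ k) (ho : k % 2 = 1) : a (k+1) < a k := by
  obtain ⟨n, hn, hk⟩ : ∃ n, 1 ≤ n ∧ k = 2*n+1 := ⟨k/2, by omega, by omega⟩
  subst hk
  have e : 2*n+1+1 = 2*(n+1) := by ring
  rw [e, a_even (n+1) (by omega), a_odd n hn]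
  have := sqrt_pos (a n) (a (n+1))
  omega

lemma a_inj : ∀ k, 1 ≤ k → ∀ l, 1 ≤ l → a k = a l → a (k+1) = a (l+1) → k = l := by
  intro k
  induction k using Nat.strong_induction_on with
  | _ k ih =>
    intro hk l hl h1 h2
    -- handle k = 1 or l = 1
    rcases Nat.lt_or_ge k 2 with hk2 | hk2
    · interval_cases k
      by_contra hne
      have hl2 : 2 ≤ l := by omega
      rcases Nat.even_or_odd' l with ⟨j, hj | hj⟩
      · have := lt_of_even l hl2 (by omega)
        rw [← h1, ← h2, a_one, a_two] at this; omega
      · have := gt_of_odd l hl2 (by omega)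
        rw [← h1, ← h2, a_one, a_two] at this; omega
    rcases Nat.lt_or_ge l 2 with hl2 | hl2
    · interval_cases l
      rcases Nat.even_or_odd' k with ⟨j, hj | hj⟩
      · have := lt_of_even k hk2 (by omega)
        rw [h1, h2, a_one, a_two] at this; omega
      · have := gt_of_odd k hk2 (by omega)
        rw [h1, h2, a_one, a_two] at this; omega
    -- both ≥ 2 : same parity
    rcases Nat.even_or_odd' k with ⟨i, hi | hi⟩ <;> rcases Nat.even_or_odd' l with ⟨j, hj | hj⟩
    · -- both even
      have hi1 : 1 ≤ i := by omega
      have hj1 : 1 ≤ j := by omega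
      subst hi; subst hj
      obtain ⟨m1, hm1⟩ := good_a i hi1
      obtain ⟨m2, hm2⟩ := good_a j hj1
      have ei : a (2*i) = a i := a_even i hi1
      have ej : a (2*j) = a j := a_even j hj1
      have eoi : a (2*i+1) = a i + a (i+1) + m1 := by rw [a_odd i hi1, sqrt_of _ _ hm1]
      have eoj : a (2*j+1) = a j + a (j+1) + m2 := by rw [a_odd j hj1, sqrt_of _ _ hm2]
      have hp : a i = a j := by rw [← ei, ← ej]; exact h1
      -- second components determined
      have s1 : Nat.sqrt (4 * a i * (a i + a (i+1) + m1) + 1) = m1 + 2 * a i :=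
        sqrt_of _ _ (good_left _ _ _ hm1)
      have s2 : Nat.sqrt (4 * a j * (a j + a (j+1) + m2) + 1) = m2 + 2 * a j :=
        sqrt_of _ _ (good_left _ _ _ hm2)
      have hq : a i + a (i+1) + m1 = a j + a (j+1) + m2 := by rw [← eoi, ← eoj]; exact h2
      have hs : m1 + 2 * a i = m2 + 2 * a j := by
        rw [← s1, ← s2]
        congr 1
        rw [hq, hp]
      have hx : a (i+1) = a (j+1) := by omega
      have := ih i (by omega) hi1 j hj1 hp hx
      omega
    · -- k even, l odd : contradiction
      exfalso
      have h3 := lt_of_even k hk2 (by omega)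
      have h4 := gt_of_odd l hl2 (by omega)
      rw [h1, h2] at h3; omega
    · exfalso
      have h3 := gt_of_odd k hk2 (by omega)
      have h4 := lt_of_even l hl2 (by omega)
      rw [h1, h2] at h3; omega
    · -- both odd
      have hi1 : 1 ≤ i := by omega
      have hj1 : 1 ≤ j := by omega
      subst hi; subst hj
      obtain ⟨m1, hm1⟩ := good_a i hi1
      obtain ⟨m2, hm2⟩ := good_a j hj1
      have ei : a (2*i+1+1) = a (i+1) := by
        have e : 2*i+1+1 = 2*(i+1) := by ring
        rw [e, a_even (i+1) (by omega)]
      have ej : a (2*j+1+1) = a (j+1) := by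
        have e : 2*j+1+1 = 2*(j+1) := by ring
        rw [e, a_even (j+1) (by omega)]
      have eoi : a (2*i+1) = a i + a (i+1) + m1 := by rw [a_odd i hi1, sqrt_of _ _ hm1]
      have eoj : a (2*j+1) = a j + a (j+1) + m2 := by rw [a_odd j hj1, sqrt_of _ _ hm2]
      have hq : a (i+1) = a (j+1) := by rw [← ei, ← ej]; exact h2
      have s1 : Nat.sqrt (4 * (a i + a (i+1) + m1) * a (i+1) + 1) = m1 + 2 * a (i+1) :=
        sqrt_of _ _ (good_right _ _ _ hm1)
      have s2 : Nat.sqrt (4 * (a j + a (j+1) + m2) * a (j+1) + 1) = m2 + 2 * a (j+1) :=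
        sqrt_of _ _ (good_right _ _ _ hm2)
      have hp : a i + a (i+1) + m1 = a j + a (j+1) + m2 := by rw [← eoi, ← eoj]; exact h1
      have hs : m1 + 2 * a (i+1) = m2 + 2 * a (j+1) := by
        rw [← s1, ← s2]
        congr 1
        rw [hp, hq]
      have hx : a i = a j := by omega
      have := ih i (by omega) hi1 j hj1 hx hq
      omega

lemma a_surj : ∀ N p q, p + q ≤ N → Good p q → ∃ k, 1 ≤ k ∧ a k = p ∧ a (k+1) = q := by
  intro N
  induction N using Nat.strong_induction_on with
  | _ N ih =>
    rintro p q hN ⟨m, hm⟩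
    rcases lt_trichotomy p q with hpq | hpq | hpq
    · obtain ⟨x, m0, hm0, hqe, hx⟩ := descend p q m hm hpq
      obtain ⟨k, hk1, hkp, hkx⟩ := ih (p + x) (by omega) p x le_rfl ⟨m0, hx⟩
      refine ⟨2*k, by omega, ?_, ?_⟩
      · rw [a_even k hk1]; exact hkp
      · rw [a_odd k hk1, hkp, hkx, sqrt_of _ _ hx]; omega
    · subst hpq
      have := eq_zero_of_diag p m hm
      exact ⟨1, le_rfl, by rw [a_one]; omega, by rw [a_two]; omega⟩
    · have hm' : 4*q*p+1 = m*m := by rw [← hm]; ring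
      obtain ⟨x, m0, hm0, hpe, hx⟩ := descend q p m hm' hpq
      have hx' : 4*x*q+1 = m0*m0 := by rw [← hx]; ring
      obtain ⟨k, hk1, hkx, hkq⟩ := ih (x + q) (by omega) x q le_rfl ⟨m0, hx'⟩
      refine ⟨2*k+1, by omega, ?_, ?_⟩
      · rw [a_odd k hk1, hkx, hkq, sqrt_of _ _ hx']; omega
      · have e : 2*k+1+1 = 2*(k+1) := by ring
        rw [e, a_even (k+1) (by omega)]; exact hkq


lemma rsqrt (p q m : ℕ) (h : 4*p*q+1 = m*m) :
    Real.sqrt (4 * (p:ℝ) * (q:ℝ) + 1) = (m:ℝ) := by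
  have e : (4 * (p:ℝ) * (q:ℝ) + 1) = ((m:ℝ) * (m:ℝ)) := by
    have := congrArg (Nat.cast (R := ℝ)) h
    push_cast at this
    linarith
  rw [e, Real.sqrt_mul_self (by positivity)]

lemma b_eq (b : ℕ → ℝ)
    (hb1 : b 1 = 0)
    (hbeven : ∀ n, 1 ≤ n → b (2 * n) = b n)
    (hbodd : ∀ n, 1 ≤ n → b (2 * n + 1) =
      b n + b (n + 1) + Real.sqrt (4 * b n * b (n + 1) + 1)) :
    ∀ n, 1 ≤ n → b n = ((a n : ℕ) : ℝ) := by
  intro n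
  induction n using Nat.strong_induction_on with
  | _ n ih =>
    intro hn
    rcases Nat.lt_or_ge n 2 with h2 | h2
    · interval_cases n
      rw [hb1, a_one]; norm_num
    · rcases Nat.even_or_odd' n with ⟨k, hk | hk⟩
      · have hk1 : 1 ≤ k := by omega
        subst hk
        rw [hbeven k hk1, ih k (by omega) hk1, a_even k hk1]
      · have hk1 : 1 ≤ k := by omega
        subst hk
        obtain ⟨m, hm⟩ := good_a k hk1
        rw [hbodd k hk1, ih k (by omega) hk1, ih (k+1) (by omega) (by omega),
          rsqrt _ _ _ hm, a_odd k hk1, sqrt_of _ _ hm]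
        push_cast
        ring

end BPaux

/-- Every ordered pair `(p, q)` of natural numbers with `4pq + 1` a perfect square
appears exactly once among the consecutive pairs `(b k, b (k+1))`, `k ≥ 1`. -/
theorem b_pairs_bijOn
    (b : ℕ → ℝ)
    (hb1 : b 1 = 0)
    (hbeven : ∀ n, 1 ≤ n → b (2 * n) = b n)
    (hbodd : ∀ n, 1 ≤ n → b (2 * n + 1) =
      b n + b (n + 1) + Real.sqrt (4 * b n * b (n + 1) + 1)) :
    Set.BijOn (fun k => (b k, b (k + 1))) {k : ℕ | 1 ≤ k}
      {p : ℝ × ℝ | (∃ x : ℕ, p.1 = (x : ℝ)) ∧ (∃ y : ℕ, p.2 = (y : ℝ)) ∧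
        ∃ m : ℕ, 4 * p.1 * p.2 + 1 = (m : ℝ) ^ 2} := by
  have hb := BPaux.b_eq b hb1 hbeven hbodd
  refine ⟨?_, ?_, ?_⟩
  · intro k hk
    simp only [Set.mem_setOf_eq] at hk ⊢
    rw [hb k hk, hb (k+1) (by omega)]
    obtain ⟨m, hm⟩ := BPaux.good_a k hk
    refine ⟨⟨_, rfl⟩, ⟨_, rfl⟩, m, ?_⟩
    have := congrArg (Nat.cast (R := ℝ)) hm
    push_cast at this
    rw [pow_two]
    linarith
  · intro k hk l hl heq
    simp only [Set.mem_setOf_eq] at hk hl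
    simp only [Prod.mk.injEq] at heq
    obtain ⟨h1, h2⟩ := heq
    rw [hb k hk, hb l hl] at h1
    rw [hb (k+1) (by omega), hb (l+1) (by omega)] at h2
    exact BPaux.a_inj k hk l hl (by exact_mod_cast h1) (by exact_mod_cast h2)
  · rintro ⟨x, y⟩ ⟨⟨p, hp⟩, ⟨q, hq⟩, m, hm⟩
    simp only at hp hq hm
    subst hp; subst hq
    have hnat : 4*p*q+1 = m*m := by
      have : ((4*p*q+1 : ℕ) : ℝ) = ((m*m : ℕ) : ℝ) := by
        push_cast
        rw [← pow_two]
        linarith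
      exact_mod_cast this
    obtain ⟨k, hk1, hkp, hkq⟩ := BPaux.a_surj (p+q) p q le_rfl ⟨m, hnat⟩
    refine ⟨k, hk1, ?_⟩
    simp only [Prod.mk.injEq]
    constructor
    · rw [hb k hk1, hkp]
    · rw [hb (k+1) (by omega), hkq]
end

section
/- For every k ≥ 1, a_k² · b_{k+1} + a_{k+1}² · b_k + 1 = a_k · a_{k+1} · √(4·b_k·b_{k+1} + 1). -/
/-- For `k ≥ 1`, `a k ^ 2 * b (k+1) + a (k+1) ^ 2 * b k + 1
    = a k * a (k+1) * √(4 b k b (k+1) + 1)`. -/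
theorem stern_b_sqrt_identity
    (a : ℕ → ℕ)
    (ha0 : a 0 = 0) (ha1 : a 1 = 1)
    (haeven : ∀ n, 1 ≤ n → a (2 * n) = a n)
    (haodd : ∀ n, 1 ≤ n → a (2 * n + 1) = a n + a (n + 1))
    (b : ℕ → ℝ)
    (hb1 : b 1 = 0)
    (hbeven : ∀ n, 1 ≤ n → b (2 * n) = b n)
    (hbodd : ∀ n, 1 ≤ n → b (2 * n + 1) =
      b n + b (n + 1) + Real.sqrt (4 * b n * b (n + 1) + 1))
    (k : ℕ) (hk : 1 ≤ k) :
    (a k : ℝ) ^ 2 * b (k + 1) + (a (k + 1) : ℝ) ^ 2 * b k + 1 =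
      (a k : ℝ) * (a (k + 1) : ℝ) * Real.sqrt (4 * b k * b (k + 1) + 1) := by
  have hbnn : ∀ n, 1 ≤ n → 0 ≤ b n := by
    intro n
    induction n using Nat.strong_induction_on with
    | _ n ih =>
      intro hn
      rcases Nat.even_or_odd n with ⟨m, hm⟩ | ⟨m, hm⟩
      · have hm1 : 1 ≤ m := by omega
        have h := ih m (by omega) hm1
        rw [show n = 2 * m by omega, hbeven m hm1]
        exact h
      · rcases Nat.eq_zero_or_pos m with h0 | h1
        · rw [show n = 1 by omega, hb1]
        · rw [show n = 2 * m + 1 by omega, hbodd m h1]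
          have h2 := ih m (by omega) h1
          have h3 := ih (m + 1) (by omega) (by omega)
          have h4 := Real.sqrt_nonneg (4 * b m * b (m + 1) + 1)
          linarith
  revert hk
  induction k using Nat.strong_induction_on with
  | _ k ih =>
    intro hk
    by_cases hk1 : k = 1
    · subst hk1
      have h2a : a 2 = 1 := by have := haeven 1 le_rfl; simpa [ha1] using this
      have h2b : b 2 = 0 := by have := hbeven 1 le_rfl; simpa [hb1] using this
      norm_num [show (1:ℕ)+1 = 2 from rfl, h2a, h2b, ha1, hb1, Real.sqrt_one]
    · rcases Nat.even_or_odd k with ⟨m, hm⟩ | ⟨m, hm⟩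
      · -- k = 2m
        have hm1 : 1 ≤ m := by omega
        have hk2 : k = 2 * m := by omega
        subst hk2
        set s := Real.sqrt (4 * b m * b (m + 1) + 1) with hs
        have hs0 : 0 ≤ s := Real.sqrt_nonneg _
        have hbm := hbnn m hm1
        have hbm1 := hbnn (m + 1) (by omega)
        have hsumnn : (0 : ℝ) ≤ 4 * b m * b (m + 1) + 1 := by positivity
        have hs2 : s ^ 2 = 4 * b m * b (m + 1) + 1 := Real.sq_sqrt hsumnn
        have ih' := ih m (by omega) hm1
        rw [haeven m hm1, haodd m hm1, hbeven m hm1, hbodd m hm1]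
        rw [← hs]
        have hsq : Real.sqrt (4 * b m * (b m + b (m + 1) + s) + 1)
            = 2 * b m + s := by
          rw [show 4 * b m * (b m + b (m + 1) + s) + 1 = (2 * b m + s) ^ 2 by
            linear_combination -hs2]
          exact Real.sqrt_sq (by linarith)
        rw [hsq]
        push_cast
        linear_combination ih'
      · -- k = 2m + 1
        have hm1 : 1 ≤ m := by omega
        have hk2 : k = 2 * m + 1 := by omega
        subst hk2
        set s := Real.sqrt (4 * b m * b (m + 1) + 1) with hs
        have hs0 : 0 ≤ s := Real.sqrt_nonneg _
        have hbm := hbnn m hm1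
        have hbm1 := hbnn (m + 1) (by omega)
        have hsumnn : (0 : ℝ) ≤ 4 * b m * b (m + 1) + 1 := by positivity
        have hs2 : s ^ 2 = 4 * b m * b (m + 1) + 1 := Real.sq_sqrt hsumnn
        have ih' := ih m (by omega) hm1
        rw [show 2 * m + 1 + 1 = 2 * (m + 1) by ring,
          haeven (m + 1) (by omega), hbeven (m + 1) (by omega),
          haodd m hm1, hbodd m hm1, ← hs]
        have hsq : Real.sqrt (4 * (b m + b (m + 1) + s) * b (m + 1) + 1)
            = 2 * b (m + 1) + s := by
          rw [show 4 * (b m + b (m + 1) + s) * b (m + 1) + 1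
              = (2 * b (m + 1) + s) ^ 2 by linear_combination -hs2]
          exact Real.sqrt_sq (by linarith)
        rw [hsq]
        push_cast
        linear_combination ih'
end

section
/- Let A, B be nonnegative real numbers, set N = 4AB + B², and define c_k = A·a_k² + B·b_k for k ≥ 1. Then c_1 = c_2 = A, and for all n ≥ 1: c_{2n} = c_n and c_{2n+1} = c_n + c_{n+1} + √(4·c_n·c_{n+1} + N), where √ denotes the nonnegative real square root. -/
/-- With `c k = A * a k ^ 2 + B * b k` and `N = 4AB + B^2`, the sequence `c`
satisfies `c 1 = c 2 = A`, `c (2n) = c n`, and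
`c (2n+1) = c n + c (n+1) + √(4 c n c (n+1) + N)`. -/
theorem c_recurrence
    (a : ℕ → ℕ)
    (ha0 : a 0 = 0) (ha1 : a 1 = 1)
    (haeven : ∀ n, 1 ≤ n → a (2 * n) = a n)
    (haodd : ∀ n, 1 ≤ n → a (2 * n + 1) = a n + a (n + 1))
    (b : ℕ → ℝ)
    (hb1 : b 1 = 0)
    (hbeven : ∀ n, 1 ≤ n → b (2 * n) = b n)
    (hbodd : ∀ n, 1 ≤ n → b (2 * n + 1) =
      b n + b (n + 1) + Real.sqrt (4 * b n * b (n + 1) + 1))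
    (A B : ℝ) (hA : 0 ≤ A) (hB : 0 ≤ B)
    (N : ℝ) (hN : N = 4 * A * B + B ^ 2)
    (c : ℕ → ℝ) (hc : ∀ k, 1 ≤ k → c k = A * (a k : ℝ) ^ 2 + B * b k) :
    c 1 = A ∧ c 2 = A ∧
      ∀ n, 1 ≤ n → c (2 * n) = c n ∧
        c (2 * n + 1) = c n + c (n + 1) + Real.sqrt (4 * c n * c (n + 1) + N) := by
  have ha2 : a 2 = 1 := by have := haeven 1 le_rfl; simpa [ha1] using this
  have hb2 : b 2 = 0 := by have := hbeven 1 le_rfl; simpa [hb1] using this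
  have hcases : ∀ n : ℕ, 2 ≤ n → (∃ m, 1 ≤ m ∧ n = 2 * m) ∨ (∃ m, 1 ≤ m ∧ n = 2 * m + 1) := by
    intro n hn
    rcases Nat.even_or_odd n with ⟨m, hm⟩ | ⟨m, hm⟩
    · exact Or.inl ⟨m, by omega, by omega⟩
    · exact Or.inr ⟨m, by omega, by omega⟩
  have hbn : ∀ n, 1 ≤ n → 0 ≤ b n := by
    intro n
    induction n using Nat.strong_induction_on with
    | _ n ih =>
      intro hn
      rcases eq_or_lt_of_le hn with h1 | h2
      · rw [← h1, hb1]
      · rcases hcases n h2 with ⟨m, hm1, hm2⟩ | ⟨m, hm1, hm2⟩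
        · subst hm2; rw [hbeven m hm1]; exact ih m (by omega) hm1
        · subst hm2; rw [hbodd m hm1]
          have h1 := ih m (by omega) hm1
          have h2 := ih (m + 1) (by omega) (by omega)
          have := Real.sqrt_nonneg (4 * b m * b (m + 1) + 1)
          linarith
  have hkey : ∀ n, 1 ≤ n →
      (a n : ℝ) ^ 2 * b (n + 1) + (a (n + 1) : ℝ) ^ 2 * b n + 1 =
        (a n : ℝ) * (a (n + 1) : ℝ) * Real.sqrt (4 * b n * b (n + 1) + 1) := by
    intro n
    induction n using Nat.strong_induction_on with
    | _ n ih =>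
      intro hn
      rcases eq_or_lt_of_le hn with h1 | h2
      · rw [← h1]
        norm_num [ha1, ha2, hb1, hb2]
      · rcases hcases n h2 with ⟨m, hm1, hm2⟩ | ⟨m, hm1, hm2⟩
        · subst hm2
          have hd0 : (0:ℝ) ≤ 4 * b m * b (m + 1) + 1 := by
            have := hbn m hm1
            have := hbn (m + 1) (by omega)
            positivity
          set d := Real.sqrt (4 * b m * b (m + 1) + 1) with hd
          have hd2 : d ^ 2 = 4 * b m * b (m + 1) + 1 := Real.sq_sqrt hd0
          have hdnn : 0 ≤ d := Real.sqrt_nonneg _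
          have hbm := hbn m hm1
          rw [haeven m hm1, haodd m hm1, hbeven m hm1, hbodd m hm1, ← hd]
          have hsq : Real.sqrt (4 * b m * (b m + b (m + 1) + d) + 1) = 2 * b m + d := by
            rw [show 4 * b m * (b m + b (m + 1) + d) + 1 = (2 * b m + d) ^ 2 by
              nlinarith [hd2], Real.sqrt_sq (by linarith)]
          rw [hsq]
          have hk := ih m (by omega) hm1
          rw [← hd] at hk
          push_cast
          linear_combination hk
        · subst hm2
          have hd0 : (0:ℝ) ≤ 4 * b m * b (m + 1) + 1 := by
            have := hbn m hm1
            have := hbn (m + 1) (by omega)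
            positivity
          set d := Real.sqrt (4 * b m * b (m + 1) + 1) with hd
          have hd2 : d ^ 2 = 4 * b m * b (m + 1) + 1 := Real.sq_sqrt hd0
          have hdnn : 0 ≤ d := Real.sqrt_nonneg _
          have hbm1 := hbn (m + 1) (by omega)
          have he : 2 * m + 1 + 1 = 2 * (m + 1) := by ring
          rw [haodd m hm1, hbodd m hm1, he, haeven (m + 1) (by omega),
            hbeven (m + 1) (by omega), ← hd]
          have hsq : Real.sqrt (4 * (b m + b (m + 1) + d) * b (m + 1) + 1) =
              2 * b (m + 1) + d := by
            rw [show 4 * (b m + b (m + 1) + d) * b (m + 1) + 1 = (2 * b (m + 1) + d) ^ 2 by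
              nlinarith [hd2], Real.sqrt_sq (by linarith)]
          rw [hsq]
          have hk := ih m (by omega) hm1
          rw [← hd] at hk
          push_cast
          linear_combination hk
  refine ⟨?_, ?_, ?_⟩
  · rw [hc 1 le_rfl, ha1, hb1]; norm_num
  · rw [hc 2 (by norm_num), ha2, hb2]; norm_num
  · intro n hn
    constructor
    · rw [hc (2 * n) (by omega), hc n hn, haeven n hn, hbeven n hn]
    · have hd0 : (0:ℝ) ≤ 4 * b n * b (n + 1) + 1 := by
        have := hbn n hn
        have := hbn (n + 1) (by omega)
        positivity
      set d := Real.sqrt (4 * b n * b (n + 1) + 1) with hd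
      have hd2 : d ^ 2 = 4 * b n * b (n + 1) + 1 := Real.sq_sqrt hd0
      have hdnn : 0 ≤ d := Real.sqrt_nonneg _
      have hk := hkey n hn
      rw [← hd] at hk
      have hsqrtc : Real.sqrt (4 * c n * c (n + 1) + N) =
          2 * A * (a n : ℝ) * (a (n + 1) : ℝ) + B * d := by
        have inner : 4 * c n * c (n + 1) + N =
            (2 * A * (a n : ℝ) * (a (n + 1) : ℝ) + B * d) ^ 2 := by
          rw [hc n hn, hc (n + 1) (by omega), hN]
          linear_combination 4 * A * B * hk - B ^ 2 * hd2
        rw [inner, Real.sqrt_sq (by positivity)]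
      rw [hc (2 * n + 1) (by omega), haodd n hn, hbodd n hn, ← hd, hsqrtc,
        hc n hn, hc (n + 1) (by omega)]
      push_cast
      ring
end

section
/- For all j ≥ 0 and all k with 0 ≤ k < 2^j, one has b_{2^{j+1}+k} = a_k² + b_{2^j+k}. -/
/-- For `0 ≤ k < 2^j`, `b (2^{j+1} + k) = a k ^ 2 + b (2^j + k)`. -/
theorem b_column_arithmetic
    (a : ℕ → ℕ)
    (ha0 : a 0 = 0) (ha1 : a 1 = 1)
    (haeven : ∀ n, 1 ≤ n → a (2 * n) = a n)
    (haodd : ∀ n, 1 ≤ n → a (2 * n + 1) = a n + a (n + 1))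
    (b : ℕ → ℝ)
    (hb1 : b 1 = 0)
    (hbeven : ∀ n, 1 ≤ n → b (2 * n) = b n)
    (hbodd : ∀ n, 1 ≤ n → b (2 * n + 1) =
      b n + b (n + 1) + Real.sqrt (4 * b n * b (n + 1) + 1))
    (j k : ℕ) (hk : k < 2 ^ j) :
    b (2 ^ (j + 1) + k) = (a k : ℝ) ^ 2 + b (2 ^ j + k) := by
  -- unconditional recurrences for `a`
  have hae : ∀ n, a (2 * n) = a n := by
    intro n
    rcases n with _ | n
    · rfl
    · exact haeven _ (by omega)
  have hao : ∀ n, a (2 * n + 1) = a n + a (n + 1) := by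
    intro n
    rcases n with _ | n
    · simp [ha0]
    · exact haodd _ (by omega)
  -- determinant identity
  have L3 : ∀ j, ∀ m < 2 ^ j,
      a (m + 1) * a (2 ^ j - m) = a m * a (2 ^ j - m - 1) + 1 := by
    intro j
    induction j with
    | zero =>
      intro m hm
      interval_cases m
      simp [ha0, ha1]
    | succ j ih =>
      intro m hm
      have hpj : (0 : ℕ) < 2 ^ j := Nat.pow_pos (by norm_num)
      have hps : 2 ^ (j + 1) = 2 ^ j * 2 := pow_succ 2 j
      rcases Nat.even_or_odd m with ⟨t, ht⟩ | ⟨t, ht⟩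
      · have htlt : t < 2 ^ j := by omega
        have e0 : m = 2 * t := by omega
        have e1 : m + 1 = 2 * t + 1 := by omega
        have e2 : 2 ^ (j + 1) - m = 2 * (2 ^ j - t) := by omega
        have e3 : 2 ^ (j + 1) - m - 1 = 2 * (2 ^ j - t - 1) + 1 := by omega
        have e4 : 2 ^ j - t - 1 + 1 = 2 ^ j - t := by omega
        rw [e1, e3, e2, hao, hae, e0, hae, hao, e4]
        have h := ih t htlt
        ring_nf
        ring_nf at h
        linarith [h]
      · have htlt : t < 2 ^ j := by omega
        have e0 : m = 2 * t + 1 := by omega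
        have e1 : m + 1 = 2 * (t + 1) := by omega
        have e2 : 2 ^ (j + 1) - m = 2 * (2 ^ j - t - 1) + 1 := by omega
        have e3 : 2 ^ (j + 1) - m - 1 = 2 * (2 ^ j - t - 1) := by omega
        have e4 : 2 ^ j - t - 1 + 1 = 2 ^ j - t := by omega
        rw [e1, e3, e2, hae, hao, e4, e0, hao, hae]
        have h := ih t htlt
        ring_nf
        ring_nf at h
        linarith [h]
  -- row-addition identity
  have L1 : ∀ j, ∀ k ≤ 2 ^ j, a (2 ^ (j + 1) - k) = a (2 ^ j - k) + a k := by
    intro j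
    induction j with
    | zero =>
      intro k hk
      interval_cases k
      · simpa [ha0] using hae 1
      · simp [ha0]
    | succ j ih =>
      intro k hk
      have hpj : (0 : ℕ) < 2 ^ j := Nat.pow_pos (by norm_num)
      have hps : 2 ^ (j + 1) = 2 ^ j * 2 := pow_succ 2 j
      have hps2 : 2 ^ (j + 2) = 2 ^ (j + 1) * 2 := pow_succ 2 (j + 1)
      rcases Nat.even_or_odd k with ⟨t, ht⟩ | ⟨t, ht⟩
      · have htle : t ≤ 2 ^ j := by omega
        have e0 : k = 2 * t := by omega
        have e1 : 2 ^ (j + 2) - k = 2 * (2 ^ (j + 1) - t) := by omega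
        have e2 : 2 ^ (j + 1) - k = 2 * (2 ^ j - t) := by omega
        rw [e1, e2, hae, hae, e0, hae]
        exact ih t htle
      · have htlt : t < 2 ^ j := by omega
        have e0 : k = 2 * t + 1 := by omega
        have e1 : 2 ^ (j + 2) - k = 2 * (2 ^ (j + 1) - t - 1) + 1 := by omega
        have e2 : 2 ^ (j + 1) - k = 2 * (2 ^ j - t - 1) + 1 := by omega
        have e3 : 2 ^ (j + 1) - t - 1 + 1 = 2 ^ (j + 1) - t := by omega
        have e4 : 2 ^ j - t - 1 + 1 = 2 ^ j - t := by omega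
        rw [e1, e2, hao, hao, e3, e4, e0, hao]
        have h1 := ih t (by omega)
        have h2 := ih (t + 1) (by omega)
        have e5 : 2 ^ (j + 1) - (t + 1) = 2 ^ (j + 1) - t - 1 := by omega
        have e6 : 2 ^ j - (t + 1) = 2 ^ j - t - 1 := by omega
        rw [e5, e6] at h2
        omega
  -- product formula for `b`
  have L2 : ∀ j, ∀ k ≤ 2 ^ j,
      b (2 ^ j + k) = ((a k * a (2 ^ j - k) : ℕ) : ℝ) := by
    intro j
    induction j with
    | zero =>
      intro k hk
      interval_cases k
      · simpa [ha0] using hb1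
      · have : b 2 = b 1 := hbeven 1 le_rfl
        simp [this, hb1, ha0]
    | succ j ih =>
      intro k hk
      have hpj : (0 : ℕ) < 2 ^ j := Nat.pow_pos (by norm_num)
      have hps : 2 ^ (j + 1) = 2 ^ j * 2 := pow_succ 2 j
      rcases Nat.even_or_odd k with ⟨t, ht⟩ | ⟨t, ht⟩
      · have htle : t ≤ 2 ^ j := by omega
        have e0 : k = 2 * t := by omega
        have e1 : 2 ^ (j + 1) + k = 2 * (2 ^ j + t) := by omega
        have e2 : 2 ^ (j + 1) - k = 2 * (2 ^ j - t) := by omega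
        rw [e1, hbeven _ (by omega), e2, hae, e0, hae]
        exact ih t htle
      · have htlt : t < 2 ^ j := by omega
        have e0 : k = 2 * t + 1 := by omega
        have e1 : 2 ^ (j + 1) + k = 2 * (2 ^ j + t) + 1 := by omega
        have e2 : 2 ^ (j + 1) - k = 2 * (2 ^ j - t - 1) + 1 := by omega
        have e4 : 2 ^ j - t - 1 + 1 = 2 ^ j - t := by omega
        have hX := ih t (by omega)
        have hY := ih (t + 1) (by omega)
        have e5 : 2 ^ j - (t + 1) = 2 ^ j - t - 1 := by omega
        have e6 : 2 ^ j + (t + 1) = 2 ^ j + t + 1 := by omega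
        rw [e5, e6] at hY
        have hdet := L3 j t htlt
        set p := a t
        set q := a (t + 1)
        set A := a (2 ^ j - t)
        set B := a (2 ^ j - t - 1)
        have hsq : (4 : ℝ) * b (2 ^ j + t) * b (2 ^ j + t + 1) + 1
            = ((q * A + p * B : ℕ) : ℝ) ^ 2 := by
          rw [hX, hY]
          push_cast
          have : (q : ℝ) * A = p * B + 1 := by exact_mod_cast hdet
          nlinarith [this]
        rw [e1, hbodd _ (by omega), hsq, Real.sqrt_sq (by positivity),
          e2, hao, e4, e0, hao, hX, hY]
        push_cast
        ring
  -- conclusion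
  have h1 := L2 (j + 1) k (le_of_lt (lt_of_lt_of_le hk (Nat.pow_le_pow_right (by norm_num) (by omega))))
  have h2 := L2 j k hk.le
  have h3 := L1 j k hk.le
  rw [h1, h2, h3]
  push_cast
  ring
end

section
/- For all n ≥ 3 and all j with 0 ≤ j ≤ F_{n−1} − 1, one has R_{F_{n+2}+j} = R_{F_n+j} + R_j. -/
/-- `R n` is the number of representations of `n` as a sum of distinct
Fibonacci numbers `F i`, `i ≥ 2`. -/
noncomputable def R (n : ℕ) : ℕ :=
  Nat.card {S : Finset ℕ // (∀ i ∈ S, 2 ≤ i) ∧ ∑ i ∈ S, Nat.fib i = n}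

lemma fib_lb (i : ℕ) : i + 1 ≤ Nat.fib (i + 2) := by
  induction i with
  | zero => decide
  | succ k ih =>
    have h1 : 0 < Nat.fib (k + 1) := Nat.fib_pos.mpr (by omega)
    have h2 : Nat.fib (k + 1 + 2) = Nat.fib (k + 1) + Nat.fib (k + 1 + 1) := Nat.fib_add_two
    have h3 : k + 1 + 1 = k + 2 := rfl
    rw [h3] at h2
    omega

lemma repr_subset {n : ℕ} {S : Finset ℕ} (h2 : ∀ i ∈ S, 2 ≤ i)
    (hs : ∑ i ∈ S, Nat.fib i = n) : S ⊆ Finset.range (n + 2) := by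
  intro i hi
  have hfib : Nat.fib i ≤ n := hs ▸ Finset.single_le_sum (fun _ _ => Nat.zero_le _) hi
  have h2i := h2 i hi
  have h3 := fib_lb (i - 2)
  rw [Nat.sub_add_cancel h2i] at h3
  rw [Finset.mem_range]
  omega

lemma sum_Icc_fib : ∀ m : ℕ, ∑ i ∈ Finset.Icc 2 m, Nat.fib i = Nat.fib (m + 2) - 2
  | 0 => by decide
  | 1 => by decide
  | (m + 2) => by
    rw [show m + 2 = m + 1 + 1 from rfl,
      ← Finset.insert_Icc_right_eq_Icc_add_one (by omega : 2 ≤ m + 1 + 1),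
      Finset.sum_insert (by simp), sum_Icc_fib (m + 1)]
    have h1 : m + 2 ≤ Nat.fib (m + 1 + 2) := fib_lb (m + 1)
    have h2 : Nat.fib (m + 1 + 1 + 2) = Nat.fib (m + 1 + 1) + Nat.fib (m + 1 + 2) := by
      rw [show m + 1 + 1 + 2 = (m + 2) + 2 from rfl]
      exact Nat.fib_add_two
    omega

lemma sum_le_of_le {m : ℕ} {S : Finset ℕ} (h2 : ∀ i ∈ S, 2 ≤ i)
    (hm : ∀ i ∈ S, i ≤ m) : ∑ i ∈ S, Nat.fib i ≤ Nat.fib (m + 2) - 2 := by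
  rw [← sum_Icc_fib]
  exact Finset.sum_le_sum_of_subset (fun i hi => Finset.mem_Icc.2 ⟨h2 i hi, hm i hi⟩)

lemma R_eq (n : ℕ) : R n = ((Finset.range (n + 2)).powerset.filter
    (fun S => (∀ i ∈ S, 2 ≤ i) ∧ ∑ i ∈ S, Nat.fib i = n)).card := by
  classical
  rw [R, ← Nat.card_eq_finsetCard]
  exact Nat.card_congr (Equiv.subtypeEquivRight (fun S => by
    simp only [Finset.mem_filter, Finset.mem_powerset]
    exact ⟨fun h => ⟨repr_subset h.1 h.2, h⟩, fun h => h.2⟩))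

/-- For `0 ≤ j ≤ F_{n-1} - 1`, `R (F_{n+2} + j) = R (F_n + j) + R j`. -/
theorem R_fib_shift (n j : ℕ) (hn : 3 ≤ n) (hj : j ≤ Nat.fib (n - 1) - 1) :
    R (Nat.fib (n + 2) + j) = R (Nat.fib n + j) + R j := by
  classical
  have hfibpos : 0 < Nat.fib (n - 1) := Nat.fib_pos.mpr (by omega)
  have hjlt : j < Nat.fib (n - 1) := by omega
  set N := Nat.fib (n + 2) + j with hN
  have hfe2 : Nat.fib (n + 2) = Nat.fib n + Nat.fib (n + 1) := Nat.fib_add_two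
  have hfe1 : Nat.fib (n + 1) = Nat.fib (n - 1) + Nat.fib n := by
    have h := Nat.fib_add_two (n := n - 1)
    have e1 : n - 1 + 2 = n + 1 := by omega
    have e2 : n - 1 + 1 = n := by omega
    rw [e1, e2] at h
    exact h
  have hfe3 : Nat.fib (n + 3) = Nat.fib (n + 1) + Nat.fib (n + 2) := Nat.fib_add_two
  have hmono : ∀ a b : ℕ, a ≤ b → Nat.fib a ≤ Nat.fib b := fun a b h => Nat.fib_mono h
  -- every representation of N has all elements ≤ n+2
  have hub : ∀ S : Finset ℕ, ((∀ i ∈ S, 2 ≤ i) ∧ ∑ i ∈ S, Nat.fib i = N) →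
      ∀ i ∈ S, i ≤ n + 2 := by
    intro S hS i hi
    by_contra hcon
    have h1 : Nat.fib (n + 3) ≤ Nat.fib i := hmono _ _ (by omega)
    have h2 : Nat.fib i ≤ N := hS.2 ▸ Finset.single_le_sum (fun _ _ => Nat.zero_le _) hi
    have h3 : Nat.fib (n - 1) ≤ Nat.fib (n + 1) := hmono _ _ (by omega)
    omega
  -- if n+2 ∉ S then n+1 ∈ S
  have hmem : ∀ S : Finset ℕ, ((∀ i ∈ S, 2 ≤ i) ∧ ∑ i ∈ S, Nat.fib i = N) →
      n + 2 ∉ S → n + 1 ∈ S := by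
    intro S hS hno
    by_contra hcon
    have hle : ∀ i ∈ S, i ≤ n := by
      intro i hi
      have h1 := hub S hS i hi
      have h2 : i ≠ n + 1 := fun h => hcon (h ▸ hi)
      have h3 : i ≠ n + 2 := fun h => hno (h ▸ hi)
      omega
    have hb := sum_le_of_le hS.1 hle
    rw [hS.2] at hb
    have h2 : 0 < Nat.fib (n + 2) := Nat.fib_pos.mpr (by omega)
    omega
  rw [R_eq N, R_eq (Nat.fib n + j), R_eq j]
  have hsplit := Finset.card_filter_add_card_filter_not
    (s := (Finset.range (N + 2)).powerset.filter
      (fun S => (∀ i ∈ S, 2 ≤ i) ∧ ∑ i ∈ S, Nat.fib i = N))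
    (p := fun S => n + 2 ∈ S)
  -- Part A : reps of N containing n+2 ↔ reps of j
  have eA : (((Finset.range (N + 2)).powerset.filter
      (fun S => (∀ i ∈ S, 2 ≤ i) ∧ ∑ i ∈ S, Nat.fib i = N)).filter
      (fun S => n + 2 ∈ S)).card
      = ((Finset.range (j + 2)).powerset.filter
      (fun S => (∀ i ∈ S, 2 ≤ i) ∧ ∑ i ∈ S, Nat.fib i = j)).card := by
    refine Finset.card_bij' (fun S _ => S.erase (n + 2)) (fun T _ => insert (n + 2) T)
      ?_ ?_ ?_ ?_
    · intro S hS
      simp only [Finset.mem_filter, Finset.mem_powerset] at hS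
      obtain ⟨⟨-, hQS⟩, hin⟩ := hS
      have hq1 : ∀ i ∈ S.erase (n + 2), 2 ≤ i := fun i hi =>
        hQS.1 i (Finset.mem_of_mem_erase hi)
      have hsum : ∑ i ∈ S.erase (n + 2), Nat.fib i = j := by
        have h := Finset.sum_erase_add S Nat.fib hin
        rw [hQS.2] at h
        omega
      simp only [Finset.mem_filter, Finset.mem_powerset]
      exact ⟨repr_subset hq1 hsum, hq1, hsum⟩
    · intro T hT
      simp only [Finset.mem_filter, Finset.mem_powerset] at hT
      obtain ⟨-, hq2, hsum⟩ := hT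
      have hn2T : n + 2 ∉ T := by
        intro hmemT
        have h1 := hsum ▸ Finset.single_le_sum
          (f := Nat.fib) (fun _ _ => Nat.zero_le _) hmemT
        have h2 : Nat.fib (n - 1) ≤ Nat.fib (n + 2) := hmono _ _ (by omega)
        omega
      have hq1 : ∀ i ∈ insert (n + 2) T, 2 ≤ i := by
        intro i hi
        rcases Finset.mem_insert.1 hi with h | h
        · omega
        · exact hq2 i h
      have hsum' : ∑ i ∈ insert (n + 2) T, Nat.fib i = N := by
        rw [Finset.sum_insert hn2T, hsum]
      simp only [Finset.mem_filter, Finset.mem_powerset]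
      exact ⟨⟨repr_subset hq1 hsum', hq1, hsum'⟩, Finset.mem_insert_self _ _⟩
    · intro S hS
      simp only [Finset.mem_filter, Finset.mem_powerset] at hS
      exact Finset.insert_erase hS.2
    · intro T hT
      simp only [Finset.mem_filter, Finset.mem_powerset] at hT
      obtain ⟨-, hq2, hsum⟩ := hT
      have hn2T : n + 2 ∉ T := by
        intro hmemT
        have h1 := hsum ▸ Finset.single_le_sum
          (f := Nat.fib) (fun _ _ => Nat.zero_le _) hmemT
        have h2 : Nat.fib (n - 1) ≤ Nat.fib (n + 2) := hmono _ _ (by omega)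
        omega
      exact Finset.erase_insert hn2T
  -- Part B : reps of N not containing n+2 ↔ reps of fib n + j
  have eB : (((Finset.range (N + 2)).powerset.filter
      (fun S => (∀ i ∈ S, 2 ≤ i) ∧ ∑ i ∈ S, Nat.fib i = N)).filter
      (fun S => ¬ n + 2 ∈ S)).card
      = ((Finset.range (Nat.fib n + j + 2)).powerset.filter
      (fun S => (∀ i ∈ S, 2 ≤ i) ∧ ∑ i ∈ S, Nat.fib i = Nat.fib n + j)).card := by
    refine Finset.card_bij' (fun S _ => S.erase (n + 1)) (fun T _ => insert (n + 1) T)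
      ?_ ?_ ?_ ?_
    · intro S hS
      simp only [Finset.mem_filter, Finset.mem_powerset] at hS
      obtain ⟨⟨-, hQS⟩, hno⟩ := hS
      have hin := hmem S hQS hno
      have hq1 : ∀ i ∈ S.erase (n + 1), 2 ≤ i := fun i hi =>
        hQS.1 i (Finset.mem_of_mem_erase hi)
      have hsum : ∑ i ∈ S.erase (n + 1), Nat.fib i = Nat.fib n + j := by
        have h := Finset.sum_erase_add S Nat.fib hin
        rw [hQS.2] at h
        omega
      simp only [Finset.mem_filter, Finset.mem_powerset]
      exact ⟨repr_subset hq1 hsum, hq1, hsum⟩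
    · intro T hT
      simp only [Finset.mem_filter, Finset.mem_powerset] at hT
      obtain ⟨-, hq2, hsum⟩ := hT
      have hn1T : n + 1 ∉ T := by
        intro hmemT
        have h1 := hsum ▸ Finset.single_le_sum
          (f := Nat.fib) (fun _ _ => Nat.zero_le _) hmemT
        omega
      have hn2T : n + 2 ∉ T := by
        intro hmemT
        have h1 := hsum ▸ Finset.single_le_sum
          (f := Nat.fib) (fun _ _ => Nat.zero_le _) hmemT
        have h2 : Nat.fib (n - 1) ≤ Nat.fib (n + 1) := hmono _ _ (by omega)
        omega
      have hq1 : ∀ i ∈ insert (n + 1) T, 2 ≤ i := by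
        intro i hi
        rcases Finset.mem_insert.1 hi with h | h
        · omega
        · exact hq2 i h
      have hsum' : ∑ i ∈ insert (n + 1) T, Nat.fib i = N := by
        rw [Finset.sum_insert hn1T, hsum]
        omega
      simp only [Finset.mem_filter, Finset.mem_powerset]
      refine ⟨⟨repr_subset hq1 hsum', hq1, hsum'⟩, ?_⟩
      simp only [Finset.mem_insert]
      rintro (h | h)
      · omega
      · exact hn2T h
    · intro S hS
      simp only [Finset.mem_filter, Finset.mem_powerset] at hS
      exact Finset.insert_erase (hmem S hS.1.2 hS.2)
    · intro T hT
      simp only [Finset.mem_filter, Finset.mem_powerset] at hT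
      obtain ⟨-, hq2, hsum⟩ := hT
      have hn1T : n + 1 ∉ T := by
        intro hmemT
        have h1 := hsum ▸ Finset.single_le_sum
          (f := Nat.fib) (fun _ _ => Nat.zero_le _) hmemT
        omega
      exact Finset.erase_insert hn1T
  omega
end

section
/- For every n ≥ 0, the complex number c_{n+1} = Σ_{k=0}^{n} σ^{s_F(k)} · σ̄^{s_F(n−k)} is a (rational) integer; that is, there exists m ∈ ℤ with c_{n+1} = m. -/
lemma h3c : (Real.sqrt 3 : ℂ) * (Real.sqrt 3 : ℂ) = 3 := by
  norm_cast
  exact Real.mul_self_sqrt (by norm_num)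

lemma sigma_sq : σ ^ 2 = σ - 1 := by
  unfold σ
  linear_combination ((Real.sqrt 3:ℂ) * (Real.sqrt 3:ℂ))/4 * Complex.I_sq - h3c/4

lemma conj_sigma : (starRingEnd ℂ) σ = 1 - σ := by
  unfold σ
  rw [map_div₀, map_add, map_mul, Complex.conj_I, Complex.conj_ofReal, map_one,
    (by norm_num : (2:ℂ) = ((2:ℝ):ℂ)), Complex.conj_ofReal]
  push_cast
  ring

def InZσ (z : ℂ) : Prop := ∃ a b : ℤ, z = a + b * σ

lemma InZσ.mul {x y : ℂ} (hx : InZσ x) (hy : InZσ y) : InZσ (x * y) := by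
  obtain ⟨a, b, rfl⟩ := hx
  obtain ⟨c, d, rfl⟩ := hy
  refine ⟨a * c - b * d, a * d + b * c + b * d, ?_⟩
  have := sigma_sq
  push_cast
  linear_combination (b : ℂ) * d * sigma_sq

lemma InZσ.pow {x : ℂ} (hx : InZσ x) (m : ℕ) : InZσ (x ^ m) := by
  induction m with
  | zero => exact ⟨1, 0, by norm_num⟩
  | succ k ih => rw [pow_succ]; exact ih.mul hx

lemma InZσ.add {x y : ℂ} (hx : InZσ x) (hy : InZσ y) : InZσ (x + y) := by
  obtain ⟨a, b, rfl⟩ := hx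
  obtain ⟨c, d, rfl⟩ := hy
  exact ⟨a + c, b + d, by push_cast; ring⟩

/-- If `sF n` is the number of terms in the Zeckendorf representation of `n`,
then `c (n+1) = Σ_{k=0}^n σ^{sF k} σ̄^{sF (n-k)}` is a rational integer. -/
theorem c_is_integer
    (sF : ℕ → ℕ)
    (hsF : ∀ n, ∃ S : Finset ℕ, (∀ i ∈ S, 2 ≤ i) ∧
      (∀ i, ¬(i ∈ S ∧ i + 1 ∈ S)) ∧ (∑ i ∈ S, Nat.fib i) = n ∧ sF n = S.card)
    (n : ℕ) :
    ∃ m : ℤ,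
      (∑ k ∈ Finset.range (n + 1),
        σ ^ (sF k) * ((starRingEnd ℂ) σ) ^ (sF (n - k))) = (m : ℂ) := by
  set S : ℂ := ∑ k ∈ Finset.range (n + 1),
      σ ^ (sF k) * ((starRingEnd ℂ) σ) ^ (sF (n - k)) with hS
  -- S lies in ℤ[σ]
  have hmem : InZσ S := by
    apply Finset.sum_induction _ InZσ (fun _ _ ha hb => ha.add hb) ⟨0, 0, by norm_num⟩
    intro k _
    exact (InZσ.pow ⟨0, 1, by push_cast; ring⟩ _).mul
      (InZσ.pow (by rw [conj_sigma]; exact ⟨1, -1, by push_cast; ring⟩) _)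
  -- S is conjugation-invariant
  have hconjS : (starRingEnd ℂ) S = S := by
    rw [hS, map_sum]
    rw [← Finset.sum_range_reflect (fun k => σ ^ (sF k) * ((starRingEnd ℂ) σ) ^ (sF (n - k)))]
    apply Finset.sum_congr rfl
    intro k hk
    have hk' : k ≤ n := Nat.lt_succ_iff.mp (Finset.mem_range.mp hk)
    rw [map_mul, map_pow, map_pow, Complex.conj_conj]
    have e1 : n + 1 - 1 - k = n - k := by omega
    rw [e1, Nat.sub_sub_self hk']
    ring
  obtain ⟨a, b, hab⟩ := hmem
  -- from conjugation invariance, b = 0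
  have hb : (b : ℂ) = 0 := by
    rw [hab, map_add, map_mul, conj_sigma] at hconjS
    have h1 : (starRingEnd ℂ) (a : ℂ) = (a : ℂ) := by
      rw [← Complex.ofReal_intCast, Complex.conj_ofReal]
    have h2 : (starRingEnd ℂ) (b : ℂ) = (b : ℂ) := by
      rw [← Complex.ofReal_intCast, Complex.conj_ofReal]
    rw [h1, h2] at hconjS
    have : (b : ℂ) * (2 * σ - 1) = 0 := by linear_combination -hconjS
    have hσ : 2 * σ - 1 = Real.sqrt 3 * Complex.I := by unfold σ; ring
    rw [hσ, mul_eq_zero] at this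
    rcases this with h | h
    · exact h
    · exfalso
      rcases mul_eq_zero.mp h with h' | h'
      · have : Real.sqrt 3 = 0 := by exact_mod_cast h'
        have := Real.sqrt_pos.mpr (by norm_num : (0:ℝ) < 3)
        linarith
      · exact Complex.I_ne_zero h'
  exact ⟨a, by rw [hab, hb]; ring⟩
end
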